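/- On the nilpotent Lie algebra g_{6,N3} with structure equations (0,0,0,e^{12},e^{13},e^{23}), the pair F = -2e^{34} - e^{25} + e^{16} (from α = e^1+ie^6, ω = -2e^{34}-e^{25}) and ρ = Re((e^1+ie^6)∧(2e^4+ie^3)∧(e^5+ie^2)) are both closed, and F∧F∧F ≠ 0. -/
import Mathlib


open ExteriorAlgebra

noncomputable section

/-- The complexified exterior algebra of the dual of the 6-dimensional nilpotent
    Lie algebra g_{6,N3}. -/
abbrev E6 : Type := ExteriorAlgebra ℂ (Fin 6 → ℂ)

/-- The basis 1-forms e^1, ..., e^6 (0-indexed). -/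
def e (i : Fin 6) : E6 := ι ℂ (Pi.single i 1)

/-- Structure equations of g_{6,N3}: (0,0,0,e^{12},e^{13},e^{23}). -/
def d1 : Fin 6 → E6 := ![0, 0, 0, e 0 * e 1, e 0 * e 2, e 1 * e 2]

/-- α = e^1 + i e^6. -/
def α : E6 := e 0 + Complex.I • e 5
def αbar : E6 := e 0 - Complex.I • e 5
def dα : E6 := d1 0 + Complex.I • d1 5
def dαbar : E6 := d1 0 - Complex.I • d1 5
/-- β = 2e^4 + i e^3. -/
def β : E6 := (2 : ℂ) • e 3 + Complex.I • e 2
def dβ : E6 := (2 : ℂ) • d1 3 + Complex.I • d1 2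
def βbar : E6 := (2 : ℂ) • e 3 - Complex.I • e 2
def dβbar : E6 := (2 : ℂ) • d1 3 - Complex.I • d1 2
/-- γ = e^5 + i e^2. -/
def γ : E6 := e 4 + Complex.I • e 1
def dγ : E6 := d1 4 + Complex.I • d1 1
def γbar : E6 := e 4 - Complex.I • e 1
def dγbar : E6 := d1 4 - Complex.I • d1 1
/-- Ω = (2e^4 + i e^3) ∧ (e^5 + i e^2). -/
def Ω : E6 := β * γ
def dΩ : E6 := dβ * γ - β * dγ
def Ωbar : E6 := βbar * γbar
def dΩbar : E6 := dβbar * γbar - βbar * dγbar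
/-- ω = -2e^{34} - e^{25}. -/
def ω : E6 := (-2 : ℂ) • (e 2 * e 3) - e 1 * e 4
/-- dω, by the Leibniz rule. -/
def dω : E6 := (-2 : ℂ) • (d1 2 * e 3 - e 2 * d1 3) - (d1 1 * e 4 - e 1 * d1 4)
/-- F = ω + (i/2) α ∧ ᾱ  (= -2e^{34} - e^{25} + e^{16}). -/
def F : E6 := ω + (Complex.I / 2) • (α * αbar)
def dF : E6 := dω + (Complex.I / 2) • (dα * αbar - α * dαbar)
/-- ρ = Re(α ∧ Ω) = (1/2)(α ∧ Ω + ᾱ ∧ Ω̄). -/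
def ρ : E6 := ((1 : ℂ) / 2) • (α * Ω + αbar * Ωbar)
def dρ : E6 := ((1 : ℂ) / 2) • ((dα * Ω - α * dΩ) + (dαbar * Ωbar - αbar * dΩbar))

lemma esq (i : Fin 6) : e i * e i = 0 := ι_sq_zero _

lemma esq' (i : Fin 6) (x : E6) : e i * (e i * x) = 0 := by
  rw [← mul_assoc, esq, zero_mul]

lemma eswap (i j : Fin 6) : e i * e j = -(e j * e i) :=
  eq_neg_of_add_eq_zero_left (ι_add_mul_swap _ _)

lemma eswap' (i j : Fin 6) (x : E6) : e i * (e j * x) = -(e j * (e i * x)) := by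
  rw [← mul_assoc, eswap, neg_mul, mul_assoc]

lemma d1_0 : d1 0 = 0 := rfl
lemma d1_1 : d1 1 = 0 := rfl
lemma d1_2 : d1 2 = 0 := rfl
lemma d1_3 : d1 3 = e 0 * e 1 := rfl
lemma d1_4 : d1 4 = e 0 * e 2 := rfl
lemma d1_5 : d1 5 = e 1 * e 2 := rfl

theorem dF_zero : dF = 0 := by
  simp only [dF, dω, dα, dαbar, α, αbar, d1_0, d1_1, d1_2, d1_3, d1_4, d1_5]
  simp only [mul_add, add_mul, mul_sub, sub_mul, mul_neg, neg_mul, smul_add, smul_sub, smul_neg,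
    smul_smul, mul_smul_comm, smul_mul_assoc, mul_assoc, zero_mul, mul_zero, smul_zero,
    zero_sub, sub_zero, zero_add, add_zero, neg_neg, neg_zero,
    esq, esq', eswap 1 0, eswap' 1 0, eswap 2 0, eswap' 2 0, eswap 2 1, eswap' 2 1,
    eswap 3 0, eswap' 3 0, eswap 3 1, eswap' 3 1, eswap 3 2, eswap' 3 2,
    eswap 4 0, eswap' 4 0, eswap 4 1, eswap' 4 1, eswap 4 2, eswap' 4 2, eswap 4 3, eswap' 4 3,
    eswap 5 0, eswap' 5 0, eswap 5 1, eswap' 5 1, eswap 5 2, eswap' 5 2, eswap 5 3, eswap' 5 3,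
    eswap 5 4, eswap' 5 4]
  match_scalars <;> ring_nf <;> simp [Complex.I_sq] <;> ring_nf

theorem dρ_zero : dρ = 0 := by
  simp only [dρ, dα, dαbar, dΩ, dΩbar, Ω, Ωbar, α, αbar, β, βbar, γ, γbar, dβ, dβbar, dγ, dγbar,
    d1_0, d1_1, d1_2, d1_3, d1_4, d1_5]
  simp only [mul_add, add_mul, mul_sub, sub_mul, mul_neg, neg_mul, smul_add, smul_sub, smul_neg,
    smul_smul, mul_smul_comm, smul_mul_assoc, mul_assoc, zero_mul, mul_zero, smul_zero,
    zero_sub, sub_zero, zero_add, add_zero, neg_neg, neg_zero,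
    esq, esq', eswap 1 0, eswap' 1 0, eswap 2 0, eswap' 2 0, eswap 2 1, eswap' 2 1,
    eswap 3 0, eswap' 3 0, eswap 3 1, eswap' 3 1, eswap 3 2, eswap' 3 2,
    eswap 4 0, eswap' 4 0, eswap 4 1, eswap' 4 1, eswap 4 2, eswap' 4 2, eswap 4 3, eswap' 4 3,
    eswap 5 0, eswap' 5 0, eswap 5 1, eswap' 5 1, eswap 5 2, eswap' 5 2, eswap 5 3, eswap' 5 3,
    eswap 5 4, eswap' 5 4]
  match_scalars <;> ring_nf <;> simp [Complex.I_sq] <;> ring_nf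

theorem F_cubed : F * F * F = (12 : ℂ) • (e 0 * (e 1 * (e 2 * (e 3 * (e 4 * e 5))))) := by
  simp only [F, ω, α, αbar]
  simp only [mul_add, add_mul, mul_sub, sub_mul, mul_neg, neg_mul, smul_add, smul_sub, smul_neg,
    smul_smul, mul_smul_comm, smul_mul_assoc, mul_assoc, zero_mul, mul_zero, smul_zero,
    zero_sub, sub_zero, zero_add, add_zero, neg_neg, neg_zero,
    esq, esq', eswap 1 0, eswap' 1 0, eswap 2 0, eswap' 2 0, eswap 2 1, eswap' 2 1,
    eswap 3 0, eswap' 3 0, eswap 3 1, eswap' 3 1, eswap 3 2, eswap' 3 2,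
    eswap 4 0, eswap' 4 0, eswap 4 1, eswap' 4 1, eswap 4 2, eswap' 4 2, eswap 4 3, eswap' 4 3,
    eswap 5 0, eswap' 5 0, eswap 5 1, eswap' 5 1, eswap 5 2, eswap' 5 2, eswap 5 3, eswap' 5 3,
    eswap 5 4, eswap' 5 4]
  match_scalars <;> ring_nf <;> simp [Complex.I_sq] <;> ring_nf

/-- The linear functional on E6 reading off the coefficient of the top form. -/
def topCoeff : E6 →ₗ[ℂ] ℂ :=
  liftAlternating (fun i => match i with
    | 6 => Matrix.detRowAlternating
    | _ => 0)

set_option maxRecDepth 20000 in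
lemma topCoeff_top : topCoeff (e 0 * (e 1 * (e 2 * (e 3 * (e 4 * e 5))))) = 1 := by
  have h : e 0 * (e 1 * (e 2 * (e 3 * (e 4 * e 5)))) =
      ιMulti ℂ 6 (fun i => Pi.single i 1) := by
    rw [ιMulti_apply]
    simp only [List.ofFn_succ, List.ofFn_zero, List.prod_cons, List.prod_nil, mul_one, e]
    rfl
  rw [h, topCoeff, liftAlternating_apply_ιMulti]
  show Matrix.detRowAlternating (fun i => Pi.single i 1) = 1
  have : (fun i => Pi.single i 1 : Fin 6 → Fin 6 → ℂ) = (1 : Matrix (Fin 6) (Fin 6) ℂ) := by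
    ext i j
    simp [Matrix.one_apply, Pi.single_apply, eq_comm]
  calc Matrix.detRowAlternating (fun i => Pi.single i 1 : Matrix (Fin 6) (Fin 6) ℂ)
      = Matrix.det (1 : Matrix (Fin 6) (Fin 6) ℂ) := congrArg Matrix.det this
    _ = 1 := Matrix.det_one

set_option maxRecDepth 20000 in
theorem F3_ne : F * F * F ≠ 0 := by
  intro h
  have h2 := congrArg topCoeff h
  rw [F_cubed, map_smul, topCoeff_top, map_zero] at h2
  norm_num at h2

/-- On g_{6,N3}, the 2-form F = -2e^{34} - e^{25} + e^{16} (from α = e^1 + i e^6,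
    ω = -2e^{34} - e^{25}) and ρ = Re(α ∧ Ω) are both closed, and F ∧ F ∧ F ≠ 0. -/
theorem stmt10 : dF = 0 ∧ dρ = 0 ∧ F * F * F ≠ 0 := ⟨dF_zero, dρ_zero, F3_ne⟩
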